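/- arXiv:2204.12055 — 2 statements merged into one kernel-verified Lean document; each statement's English description precedes it below -/
import Mathlib

section
/- Let G be a directed graph with edge lengths ℓ, y* a feasible RE dual, and y : V → Z arbitrary. Then for any directed path P in G, the sum over edges e of P of the negative parts of ℓ_y(e) satisfies Σ_{e ∈ P} max(0, -ℓ_y(e)) ≤ 2·Σ_{v ∈ V} |y*(v) - y(v)|, provided each vertex appears at most twice as an endpoint of edges of P. -/
/-- Total negative part of reduced lengths along a path is at most twice the ℓ1 error. -/
theorem path_negative_part_bound {V : Type*} [Fintype V] [DecidableEq V]
    (E : V → V → Prop) (ℓ : V → V → ℤ)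
    (ystar y : V → ℤ) (hfeas : ∀ u v, E u v → ℓ u v + ystar u - ystar v ≥ 0)
    (k : ℕ) (c : ℕ → V) (hedges : ∀ i < k, E (c i) (c (i + 1)))
    (hmult : ∀ v : V,
      ((Finset.range k).filter (fun i => c i = v)).card
        + ((Finset.range k).filter (fun i => c (i + 1) = v)).card ≤ 2) :
    (∑ i ∈ Finset.range k, max 0 (-(ℓ (c i) (c (i + 1)) + y (c i) - y (c (i + 1)))))
      ≤ 2 * ∑ v : V, |ystar v - y v| := by
  set f : V → ℤ := fun v => |ystar v - y v| with hf
  have aux : ∀ g : ℕ → V, ∑ i ∈ Finset.range k, f (g i)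
      = ∑ v : V, (((Finset.range k).filter (fun i => g i = v)).card : ℤ) * f v := by
    intro g
    have h1 : ∀ i, f (g i) = ∑ v : V, if g i = v then f v else 0 := by
      intro i; simp
    simp_rw [h1]
    rw [Finset.sum_comm]
    refine Finset.sum_congr rfl fun v _ => ?_
    rw [Finset.sum_ite, Finset.sum_const, Finset.sum_const_zero, add_zero, nsmul_eq_mul]
  have key : ∀ i ∈ Finset.range k,
      max 0 (-(ℓ (c i) (c (i + 1)) + y (c i) - y (c (i + 1))))
        ≤ f (c i) + f (c (i + 1)) := by
    intro i hi
    simp only [Finset.mem_range] at hi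
    have h1 := hfeas _ _ (hedges i hi)
    have h2 := le_abs_self (ystar (c i) - y (c i))
    have h3 := neg_abs_le (ystar (c (i + 1)) - y (c (i + 1)))
    have h4 := abs_nonneg (ystar (c i) - y (c i))
    have h5 := abs_nonneg (ystar (c (i + 1)) - y (c (i + 1)))
    rw [max_le_iff]
    constructor <;> simp only [hf] <;> omega
  calc (∑ i ∈ Finset.range k, max 0 (-(ℓ (c i) (c (i + 1)) + y (c i) - y (c (i + 1)))))
      ≤ ∑ i ∈ Finset.range k, (f (c i) + f (c (i + 1))) := Finset.sum_le_sum key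
    _ = ∑ v : V, ((((Finset.range k).filter (fun i => c i = v)).card : ℤ)
          + (((Finset.range k).filter (fun i => c (i + 1) = v)).card : ℤ)) * f v := by
        rw [Finset.sum_add_distrib, aux c, aux (fun i => c (i + 1)),
          ← Finset.sum_add_distrib]
        exact Finset.sum_congr rfl fun v _ => (add_mul _ _ _).symm
    _ ≤ ∑ v : V, 2 * f v := by
        refine Finset.sum_le_sum fun v _ => ?_
        have h1 : ((((Finset.range k).filter (fun i => c i = v)).card : ℤ)
            + (((Finset.range k).filter (fun i => c (i + 1) = v)).card : ℤ)) ≤ 2 := by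
          exact_mod_cast hmult v
        exact mul_le_mul_of_nonneg_right h1 (abs_nonneg _)
    _ = 2 * ∑ v : V, f v := (Finset.mul_sum _ _ _).symm
end

section
/- Let H be the bipartite graph constructed from a directed graph G with edge lengths ℓ as follows: each vertex u of G has copies u_1 ∈ L and u_2 ∈ R; each arc (u,v) of G gives an edge (u_1, v_2) of weight -ℓ(u,v); each vertex u gives an edge (u_1, u_2) of weight 0. Then the maximum weight of a perfect matching in H is positive if and only if G contains a cycle of negative total length. -/
/-!
A perfect matching of `H` is a permutation `σ` of `V` that moves vertices only along arcs of `G`;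
its weight is minus the total length of the nontrivial cycles of `σ`, plus the weights of its fixed
points, which are nonnegative and positive only at negative loops. If the weight is positive,
averaging along the orbits of `σ` produces a negative closed walk. Conversely, a shortest negative
closed walk is a simple cycle, and rotating along it gives a perfect matching of positive weight.
-/

open Finset Equiv

namespace Equiv.Perm

variable {α M : Type*} [Fintype α]

theorem sum_sum_range_pow_apply [AddCommMonoid M] (σ : Perm α) (f : α → α → M) (n : ℕ) :
    ∑ x, ∑ i ∈ range n, f ((σ ^ i) x) ((σ ^ (i + 1)) x) = n • ∑ x, f x (σ x) := by
  rw [sum_comm, ← card_range n, ← sum_const, card_range]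
  refine sum_congr rfl fun i _ => ?_
  simp only [pow_succ', Perm.mul_apply]
  exact Equiv.sum_comp (σ ^ i) fun x => f x (σ x)

theorem exists_pos_sum_range_pow_apply [AddCommMonoid M] [LinearOrder M] [IsOrderedAddMonoid M]
    (σ : Perm α) (f : α → α → M) {n : ℕ} (hn : n ≠ 0) (h : 0 < ∑ x, f x (σ x)) :
    ∃ x, 0 < ∑ i ∈ range n, f ((σ ^ i) x) ((σ ^ (i + 1)) x) := by
  have hpos : ∑ _x : α, (0 : M) < ∑ x, ∑ i ∈ range n, f ((σ ^ i) x) ((σ ^ (i + 1)) x) := by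
    rw [sum_const_zero, sum_sum_range_pow_apply]
    exact nsmul_pos h hn
  obtain ⟨x, -, hx⟩ := exists_lt_of_sum_lt hpos
  exact ⟨x, hx⟩

end Equiv.Perm

section Walk

variable {V M : Type*} [AddCommMonoid M]

def IsWalk (E : V → V → Prop) (c : ℕ → V) (k : ℕ) : Prop :=
  ∀ i < k, E (c i) (c (i + 1))

def walkSum (ℓ : V → V → M) (c : ℕ → V) (k : ℕ) : M :=
  ∑ i ∈ range k, ℓ (c i) (c (i + 1))

def HasNegClosedWalk [Preorder M] (E : V → V → Prop) (ℓ : V → V → M) : Prop :=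
  ∃ (k : ℕ) (c : ℕ → V), 0 < k ∧ IsWalk E c k ∧ c k = c 0 ∧ walkSum ℓ c k < 0

variable {E : V → V → Prop} {ℓ : V → V → M} {c d : ℕ → V} {a b k : ℕ}

theorem IsWalk.mono (h : IsWalk E c k) (hak : a ≤ k) : IsWalk E c a :=
  fun i hi => h i (by omega)

theorem IsWalk.congr (h : IsWalk E c k) (hcd : ∀ m ≤ k, c m = d m) : IsWalk E d k :=
  fun i hi => hcd i hi.le ▸ hcd (i + 1) hi ▸ h i hi

theorem isWalk_add : IsWalk E c (a + b) ↔ IsWalk E c a ∧ IsWalk E (fun m => c (a + m)) b := by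
  refine ⟨fun h => ⟨h.mono (by omega), fun i hi => h (a + i) (by omega)⟩, fun ⟨ha, hb⟩ i hi => ?_⟩
  rcases lt_or_ge i a with hia | hai
  · exact ha i hia
  · obtain ⟨j, rfl⟩ := Nat.exists_eq_add_of_le hai
    exact hb j (by omega)

theorem walkSum_congr (hcd : ∀ m ≤ k, c m = d m) : walkSum ℓ c k = walkSum ℓ d k :=
  sum_congr rfl fun i hi => by
    rw [mem_range] at hi
    rw [hcd i hi.le, hcd (i + 1) hi]

theorem walkSum_add : walkSum ℓ c (a + b) = walkSum ℓ c a + walkSum ℓ (fun m => c (a + m)) b := by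
  simp only [walkSum, sum_range_add, add_assoc]

/-- A closed walk through a repeated vertex `c i = c (i + p)` splits into the closed walk between
the two visits and the closed walk that shortcuts it. -/
theorem exists_split_closedWalk {i p q : ℕ} (hc : c i = c (i + p))
    (hwalk : IsWalk E c (i + p + q)) (hclosed : c (i + p + q) = c 0) :
    ∃ c₁ c₂ : ℕ → V, IsWalk E c₁ p ∧ c₁ p = c₁ 0 ∧ IsWalk E c₂ (i + q) ∧ c₂ (i + q) = c₂ 0 ∧
      walkSum ℓ c (i + p + q) = walkSum ℓ c₁ p + walkSum ℓ c₂ (i + q) := by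
  let d : ℕ → V := fun m => if m < i then c m else c (m + p)
  have hd_le : ∀ m ≤ i, c m = d m := by
    intro m hm
    rcases hm.lt_or_eq with hm | rfl
    · simp [d, hm]
    · simp [d, hc]
  have hd_add : (fun m => d (i + m)) = fun m => c (i + p + m) := by
    funext m
    simp only [d, if_neg (Nat.not_lt.2 (Nat.le_add_right i m))]
    congr 1
    omega
  have hshift : (fun m => c (i + (p + m))) = fun m => c (i + p + m) := by
    simp only [add_assoc]
  have hsplit := hwalk
  rw [add_assoc, isWalk_add, isWalk_add, hshift] at hsplit
  refine ⟨fun m => c (i + m), d, hsplit.2.1, by simp [hc], ?_, ?_, ?_⟩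
  · rw [isWalk_add, hd_add]
    exact ⟨hsplit.1.congr hd_le, hsplit.2.2⟩
  · rw [← hd_le 0 (Nat.zero_le i), ← hclosed]
    exact congrFun hd_add q
  · rw [add_assoc, walkSum_add, walkSum_add, hshift, walkSum_add, hd_add, walkSum_congr hd_le]
    abel

/-- A shortest negative closed walk is simple: a repeated vertex would split it into two shorter
closed walks, one of them negative. -/
theorem HasNegClosedWalk.exists_injOn [LinearOrder M] [IsOrderedAddMonoid M]
    (h : HasNegClosedWalk E ℓ) : ∃ (k : ℕ) (c : ℕ → V), IsWalk E c k ∧ c k = c 0 ∧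
      walkSum ℓ c k < 0 ∧ Set.InjOn c (range k) := by
  classical
  obtain ⟨c, -, hwalk, hclosed, hneg⟩ := Nat.find_spec h
  refine ⟨_, c, hwalk, hclosed, hneg, ?_⟩
  have hmin : ∀ m (c' : ℕ → V), 0 < m → m < Nat.find h → IsWalk E c' m → c' m = c' 0 →
      0 ≤ walkSum ℓ c' m :=
    fun m c' hm hlt hw hc => not_lt.1 fun hneg => Nat.find_min h hlt ⟨c', hm, hw, hc, hneg⟩
  suffices hne : ∀ i j, i < j → j < Nat.find h → c i ≠ c j by
    intro i hi j hj hij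
    simp only [coe_range, Set.mem_Iio] at hi hj
    by_contra hij'
    rcases lt_or_gt_of_ne hij' with hlt | hlt
    · exact hne i j hlt hj hij
    · exact hne j i hlt hi hij.symm
  intro i j hij hj hc
  obtain ⟨p, rfl⟩ := Nat.exists_eq_add_of_le hij.le
  obtain ⟨q, hq⟩ := Nat.exists_eq_add_of_le hj.le
  rw [hq] at hwalk hclosed hneg
  obtain ⟨c₁, c₂, hw₁, hc₁, hw₂, hc₂, hsum⟩ := exists_split_closedWalk (ℓ := ℓ) hc hwalk hclosed
  have h₁ := hmin _ c₁ (by omega) (by omega) hw₁ hc₁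
  have h₂ := hmin _ c₂ (by omega) (by omega) hw₂ hc₂
  exact hneg.not_ge (hsum ▸ add_nonneg h₁ h₂)

end Walk

theorem exists_perm_apply_eq_succ {α : Type*} [DecidableEq α] {c : ℕ → α} {k : ℕ}
    (hc : c k = c 0) (hinj : Set.InjOn c (range k)) :
    ∃ σ : Perm α, (∀ i < k, σ (c i) = c (i + 1)) ∧ ∀ x ∉ (range k).image c, σ x = x := by
  set l := (List.range k).map c
  have hnodup : l.Nodup :=
    List.Nodup.map_on (fun i hi j hj h => hinj (by simpa using hi) (by simpa using hj) h)
      List.nodup_range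
  refine ⟨l.formPerm, fun i hi => ?_, fun x hx => List.formPerm_apply_of_notMem ?_⟩
  · have hget := List.formPerm_apply_getElem l hnodup i (by simpa [l])
    simp only [l, List.getElem_map, List.getElem_range, List.length_map, List.length_range] at hget
    rw [hget]
    rcases (show i + 1 ≤ k from hi).lt_or_eq with h | h
    · rw [Nat.mod_eq_of_lt h]
    · rw [h, Nat.mod_self, hc]
  · simpa [l] using hx

section MatchingWeight

variable {V : Type*} [DecidableEq V] (E : V → V → Prop) [DecidableRel E] (ℓ : V → V → ℤ)

/-- The weight of the edge `(u₁, v₂)` of `H`. For `u = v` the edges `(u₁, u₂)` coming from the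
vertex `u` and from a loop at `u` are parallel, and only the heavier one matters. -/
def matchingWeight (u v : V) : ℤ :=
  if u = v then (if E u v then max 0 (-ℓ u v) else 0) else -ℓ u v

variable {E ℓ}

theorem matchingWeight_self_nonneg (u : V) : 0 ≤ matchingWeight E ℓ u u := by
  rw [matchingWeight, if_pos rfl]
  split_ifs <;> simp

theorem matchingWeight_of_ne {u v : V} (h : u ≠ v) : matchingWeight E ℓ u v = -ℓ u v :=
  if_neg h

theorem neg_le_matchingWeight {u v : V} (h : E u v) : -ℓ u v ≤ matchingWeight E ℓ u v := by
  unfold matchingWeight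
  split_ifs
  exacts [le_max_right _ _, le_rfl]

theorem adj_and_neg_of_matchingWeight_self_pos {u : V} (h : 0 < matchingWeight E ℓ u u) :
    E u u ∧ ℓ u u < 0 := by
  rw [matchingWeight, if_pos rfl] at h
  split_ifs at h with hE
  · exact ⟨hE, by omega⟩
  · exact absurd h (lt_irrefl 0)

variable [Fintype V]

/-- Averaging over the orbits of `σ` finds a vertex whose orbit carries positive weight; the orbit
is either a fixed loop or a cycle of `σ` along edges of `G`. -/
theorem hasNegClosedWalk_of_sum_matchingWeight_pos (σ : Perm V) (hσ : ∀ u, σ u = u ∨ E u (σ u))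
    (h : 0 < ∑ u, matchingWeight E ℓ u (σ u)) : HasNegClosedWalk E ℓ := by
  obtain ⟨x, hx⟩ := σ.exists_pos_sum_range_pow_apply _ (orderOf_pos σ).ne' h
  by_cases hfix : σ x = x
  · simp only [Perm.pow_apply_eq_self_of_apply_eq_self hfix, sum_const, card_range] at hx
    obtain ⟨hE, hℓ⟩ :=
      adj_and_neg_of_matchingWeight_self_pos ((nsmul_pos_iff (orderOf_pos σ).ne').1 hx)
    exact ⟨1, fun _ => x, one_pos, fun _ _ => hE, rfl, by simpa [walkSum] using hℓ⟩
  · have hsucc : ∀ i : ℕ, (σ ^ (i + 1)) x = σ ((σ ^ i) x) := by simp [pow_succ']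
    have hmove : ∀ i : ℕ, σ ((σ ^ i) x) ≠ (σ ^ i) x := fun i h =>
      hfix ((σ ^ i).injective (by rw [← Perm.mul_apply, ← pow_succ, hsucc, h]))
    refine ⟨orderOf σ, fun i => (σ ^ i) x, orderOf_pos σ, fun i _ => ?_, by simp, ?_⟩
    · simpa only [hsucc] using (hσ ((σ ^ i) x)).resolve_left (hmove i)
    · rw [walkSum, ← neg_pos, ← sum_neg_distrib]
      convert hx using 2 with i
      rw [hsucc, matchingWeight_of_ne (hmove i).symm]

theorem exists_sum_matchingWeight_pos (h : HasNegClosedWalk E ℓ) :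
    ∃ σ : Perm V, (∀ u, σ u = u ∨ E u (σ u)) ∧ 0 < ∑ u, matchingWeight E ℓ u (σ u) := by
  obtain ⟨k, c, hwalk, hclosed, hneg, hinj⟩ := h.exists_injOn
  obtain ⟨σ, hstep, hfix⟩ := exists_perm_apply_eq_succ hclosed hinj
  set S := (range k).image c
  refine ⟨σ, fun u => ?_, ?_⟩
  · by_cases hu : u ∈ S
    · obtain ⟨i, hi, rfl⟩ := mem_image.1 hu
      rw [mem_range] at hi
      exact .inr (hstep i hi ▸ hwalk i hi)
    · exact .inl (hfix u hu)
  have hS : -walkSum ℓ c k ≤ ∑ u ∈ S, matchingWeight E ℓ u (σ u) :=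
    calc -walkSum ℓ c k = ∑ i ∈ range k, -ℓ (c i) (c (i + 1)) := by simp [walkSum]
      _ ≤ ∑ i ∈ range k, matchingWeight E ℓ (c i) (c (i + 1)) :=
        sum_le_sum fun i hi => neg_le_matchingWeight (hwalk i (mem_range.1 hi))
      _ = ∑ u ∈ S, matchingWeight E ℓ u (σ u) := by
        rw [sum_image hinj]
        exact sum_congr rfl fun i hi => by rw [hstep i (mem_range.1 hi)]
  have hSc : 0 ≤ ∑ u ∈ Sᶜ, matchingWeight E ℓ u (σ u) :=
    sum_nonneg fun u hu => by
      rw [hfix u (mem_compl.1 hu)]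
      exact matchingWeight_self_nonneg u
  rw [← sum_add_sum_compl S]
  linarith

end MatchingWeight

/-- The maximum weight of a perfect matching in the bipartite graph `H` built from a
directed graph `G` is positive iff `G` has a negative cycle. -/
theorem matching_positive_iff_negative_cycle {V : Type*} [Fintype V] [DecidableEq V]
    (E : V → V → Prop) [DecidableRel E] (ℓ : V → V → ℤ)
    (w : V → V → ℤ)
    (hw : ∀ u v, w u v =
      if u = v then (if E u v then max 0 (-ℓ u v) else 0) else -ℓ u v) :
    (∃ σ : Equiv.Perm V, (∀ u, σ u = u ∨ E u (σ u)) ∧ 0 < ∑ u : V, w u (σ u))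
    ↔ ∃ (k : ℕ) (c : ℕ → V), 0 < k ∧ (∀ i < k, E (c i) (c (i + 1))) ∧ c k = c 0 ∧
        (∑ i ∈ Finset.range k, ℓ (c i) (c (i + 1))) < 0 := by
  obtain rfl : w = matchingWeight E ℓ := funext₂ hw
  exact ⟨fun ⟨σ, hσ, hpos⟩ => hasNegClosedWalk_of_sum_matchingWeight_pos σ hσ hpos,
    exists_sum_matchingWeight_pos⟩
end
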